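/- Let f: ℝ → ℝ be continuously differentiable with locally Hölder continuous derivative of exponent β ∈ (0,1], with f(0) = 0 and f'(0) = 0, and let F(u) = ∫₀^u f. Then for every n ∈ ℕ and ū > 0 there exists b₂ > 0 such that for all u₁,…,uₙ ∈ [-ū, ū], |F(∑ᵢ uᵢ) - ∑ᵢ F(uᵢ) - ∑_{i≠j} f(uᵢ)uⱼ| ≤ b₂ ( ∑_{i<j} |uᵢuⱼ|^{1+β/2} + ∑_{i<j<k} |uᵢuⱼ|^β |u_k| ). -/

import Mathlib

/-!
The fundamental theorem of calculus, applied twice, reduces everything to the Hölder bound on `f'`: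
`F(a+b) - F a - F b - f a * b - f b * a = ∫₀ᵇ (f(a+t) - f a - f t - a f'(t)) dt` and
`f(a+t) - f a - f t - a f'(t) = ∫₀ᵃ (f'(t+s) - f'(s) - f'(t)) ds`. Since `f'(0) = 0`, the integrand
of the inner integral is at most `2C min(|s|,|t|)^β ≤ 2C |st|^(β/2)`, which gives the two-point
estimate `2C |ab|^(1+β/2)`.

The `n`-point estimate follows by induction, adding one point `a` to the sum `S` of the others:
the defect splits into the two-point defect at `(S, a)`, the term `(f S - ∑ f(uᵢ)) a`, and the
defect of the other points. The first is controlled by the power-mean inequality; the second by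
`|f(∑ uᵢ) - ∑ f(uᵢ)| ≤ C ∑_{i<j} |uᵢ|^β |uⱼ|` (proved the same way, using the subadditivity of
`x ↦ x^β`) together with `|uⱼ| ≤ R^(1-β) |uⱼ|^β` for `|uⱼ| ≤ R`.
-/

open Finset intervalIntegral Filter Topology

namespace Fin

variable {M : Type*} [AddCommMonoid M] {m : ℕ}

lemma sum_Ioi_castSucc (i : Fin m) (h : Fin (m + 1) → M) :
    ∑ j ∈ Ioi i.castSucc, h j = ∑ j ∈ Ioi i, h j.castSucc + h (last m) := by
  rw [Ioi_eq_Ioc, top_eq_last, ← Ioo_insert_right (castSucc_lt_last i), sum_insert (by simp),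
    ← map_castSuccEmb_Ioi, sum_map, add_comm]
  rfl

lemma sum_sum_Ioi_castSucc (φ : Fin (m + 1) → Fin (m + 1) → M) :
    ∑ i, ∑ j ∈ Ioi i, φ i j =
      ∑ i : Fin m, ∑ j ∈ Ioi i, φ i.castSucc j.castSucc + ∑ i : Fin m, φ i.castSucc (last m) := by
  simp [sum_univ_castSucc, sum_Ioi_castSucc, sum_add_distrib, ← top_eq_last]

lemma sum_sum_sum_Ioi_castSucc (ψ : Fin (m + 1) → Fin (m + 1) → Fin (m + 1) → M) :
    ∑ i, ∑ j ∈ Ioi i, ∑ k ∈ Ioi j, ψ i j k =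
      ∑ i : Fin m, ∑ j ∈ Ioi i, ∑ k ∈ Ioi j, ψ i.castSucc j.castSucc k.castSucc +
        ∑ i : Fin m, ∑ j ∈ Ioi i, ψ i.castSucc j.castSucc (last m) := by
  simp [sum_univ_castSucc, sum_Ioi_castSucc, sum_add_distrib, ← top_eq_last]

end Fin

lemma continuous_of_isCompact_holder {g : ℝ → ℝ} {β : ℝ} (hβ : 0 < β)
    (hg : ∀ K : Set ℝ, IsCompact K → ∃ C > 0, ∀ s ∈ K, ∀ t ∈ K, |g s - g t| ≤ C * |s - t| ^ β) :
    Continuous g := by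
  refine continuous_iff_continuousAt.2 fun x => ?_
  obtain ⟨C, -, hC⟩ := hg (Set.Icc (x - 1) (x + 1)) isCompact_Icc
  have hbound : Tendsto (fun y => C * |y - x| ^ β) (𝓝 x) (𝓝 0) := by
    have := (((continuous_sub_right x).abs.rpow_const fun _ => Or.inr hβ.le).const_mul C).tendsto x
    simpa [Real.zero_rpow hβ.ne'] using this
  rw [ContinuousAt, tendsto_iff_norm_sub_tendsto_zero]
  refine squeeze_zero_norm' ?_ hbound
  filter_upwards [Icc_mem_nhds (sub_one_lt x) (lt_add_one x)] with y hy
  simpa using hC y hy x ⟨by linarith, by linarith⟩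

lemma abs_integral_le_mul_abs {g : ℝ → ℝ} {M b : ℝ} (hg : ∀ t, |t| ≤ |b| → |g t| ≤ M) :
    |∫ t in (0 : ℝ)..b, g t| ≤ M * |b| := by
  simpa using norm_integral_le_of_norm_le_const (a := 0) (b := b) (f := g) fun t ht =>
    hg t (by simpa using Set.abs_sub_left_of_mem_uIcc (Set.uIoc_subset_uIcc ht))

lemma sub_sub_eq_integral_of_hasDerivAt {G g : ℝ → ℝ} (hG : ∀ x, HasDerivAt G (g x) x)
    (hg : Continuous g) (hG0 : G 0 = 0) (a b : ℝ) :
    G (a + b) - G a - G b = ∫ t in (0 : ℝ)..b, (g (a + t) - g t) := by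
  rw [integral_sub (f := fun t => g (a + t))
      ((hg.comp (continuous_const_add a)).intervalIntegrable _ _) (hg.intervalIntegrable _ _),
    integral_comp_add_left g a, add_zero,
    integral_eq_sub_of_hasDerivAt (fun x _ => hG x) (hg.intervalIntegrable _ _),
    integral_eq_sub_of_hasDerivAt (fun x _ => hG x) (hg.intervalIntegrable _ _), hG0]
  ring

lemma abs_rpow_le_abs_mul_rpow_half {x y β : ℝ} (hβ : 0 ≤ β) (h : |y| ≤ |x|) :
    |y| ^ β ≤ |x * y| ^ (β / 2) := by
  calc |y| ^ β = (|y| * |y|) ^ (β / 2) := by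
        rw [Real.mul_rpow (abs_nonneg y) (abs_nonneg y),
          ← Real.rpow_add_of_nonneg (abs_nonneg y) (by positivity) (by positivity), add_halves]
    _ ≤ |x * y| ^ (β / 2) := by rw [abs_mul]; gcongr

lemma abs_sum_rpow_le_sum_abs_rpow {ι : Type*} {β : ℝ} (hβ0 : 0 < β) (hβ1 : β ≤ 1)
    (s : Finset ι) (x : ι → ℝ) : |∑ i ∈ s, x i| ^ β ≤ ∑ i ∈ s, |x i| ^ β := by
  induction s using Finset.cons_induction with
  | empty => simp [Real.zero_rpow hβ0.ne']
  | cons i s hi ih =>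
    rw [sum_cons, sum_cons]
    calc |x i + ∑ j ∈ s, x j| ^ β ≤ (|x i| + |∑ j ∈ s, x j|) ^ β := by
          gcongr; exact abs_add_le _ _
      _ ≤ |x i| ^ β + |∑ j ∈ s, x j| ^ β :=
          Real.rpow_add_le_add_rpow (abs_nonneg _) (abs_nonneg _) hβ0.le hβ1
      _ ≤ _ := by gcongr

lemma abs_sum_mul_rpow_le {m : ℕ} {p : ℝ} (hp : 1 ≤ p) (w : Fin m → ℝ) (a : ℝ) :
    |(∑ i, w i) * a| ^ p ≤ (m : ℝ) ^ (p - 1) * ∑ i, |w i * a| ^ p := by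
  have hsum : |∑ i, w i| ^ p ≤ (m : ℝ) ^ (p - 1) * ∑ i, |w i| ^ p :=
    (Real.rpow_le_rpow (abs_nonneg _) (abs_sum_le_sum_abs _ _) (by linarith)).trans
      (by simpa using Real.rpow_sum_le_const_mul_sum_rpow univ w hp)
  simp only [abs_mul, Real.mul_rpow (abs_nonneg _) (abs_nonneg _), ← sum_mul, ← mul_assoc]
  gcongr

lemma abs_le_rpow_mul_abs_rpow {x R β : ℝ} (hβ1 : β ≤ 1) (hx : |x| ≤ R) :
    |x| ≤ R ^ (1 - β) * |x| ^ β := by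
  calc |x| = |x| ^ (1 - β) * |x| ^ β := by
        rw [← Real.rpow_add' (abs_nonneg x) (by norm_num), sub_add_cancel, Real.rpow_one]
    _ ≤ R ^ (1 - β) * |x| ^ β := by gcongr

def primitiveDefect (F f : ℝ → ℝ) {m : ℕ} (v : Fin m → ℝ) : ℝ :=
  F (∑ i, v i) - ∑ i, F (v i) - ∑ i, f (v i) * (∑ j, v j - v i)

lemma primitiveDefect_snoc (F f : ℝ → ℝ) {m : ℕ} (w : Fin m → ℝ) (a : ℝ) :
    primitiveDefect F f (Fin.snoc w a : Fin (m + 1) → ℝ) =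
      (F (∑ i, w i + a) - F (∑ i, w i) - F a - f (∑ i, w i) * a - f a * ∑ i, w i) +
        (f (∑ i, w i) - ∑ i, f (w i)) * a + primitiveDefect F f w := by
  simp only [primitiveDefect, Fin.sum_univ_castSucc, Fin.snoc_castSucc, Fin.snoc_last, mul_sub,
    mul_add, sum_add_distrib, sum_sub_distrib, ← sum_mul]
  ring

section Holder

variable {f F : ℝ → ℝ} {β C R : ℝ}

lemma abs_add_sub_sub_le_of_holder {g : ℝ → ℝ} (hβ : 0 ≤ β) (hC : 0 ≤ C) (hg0 : g 0 = 0)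
    (hg : ∀ s t, |s| ≤ R → |t| ≤ R → |g s - g t| ≤ C * |s - t| ^ β)
    {x y : ℝ} (hxy : |x| + |y| ≤ R) :
    |g (x + y) - g x - g y| ≤ 2 * C * |x * y| ^ (β / 2) := by
  have hx : |x| ≤ R := by linarith [abs_nonneg y]
  have hy : |y| ≤ R := by linarith [abs_nonneg x]
  have hxy' : |x + y| ≤ R := (abs_add_le x y).trans hxy
  have h0 : |(0 : ℝ)| ≤ R := by simpa using (abs_nonneg x).trans hx
  have hgx : |g x| ≤ C * |x| ^ β := by simpa [hg0] using hg x 0 hx h0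
  have hgy : |g y| ≤ C * |y| ^ β := by simpa [hg0] using hg y 0 hy h0
  have hgxy : |g (x + y) - g x| ≤ C * |y| ^ β := by simpa using hg (x + y) x hxy' hx
  have hgyx : |g (x + y) - g y| ≤ C * |x| ^ β := by simpa using hg (x + y) y hxy' hy
  rcases le_total |y| |x| with h | h
  · calc |g (x + y) - g x - g y| ≤ |g (x + y) - g x| + |g y| := abs_sub _ _
      _ ≤ 2 * C * |y| ^ β := by linarith
      _ ≤ 2 * C * |x * y| ^ (β / 2) := by gcongr; exact abs_rpow_le_abs_mul_rpow_half hβ h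
  · calc |g (x + y) - g x - g y| ≤ |g (x + y) - g y| + |g x| := by
          rw [sub_right_comm]; exact abs_sub _ _
      _ ≤ 2 * C * |x| ^ β := by linarith
      _ ≤ 2 * C * |x * y| ^ (β / 2) := by
          rw [mul_comm x]; gcongr; exact abs_rpow_le_abs_mul_rpow_half hβ h

lemma abs_add_sub_sub_le_of_deriv_holder (hf : Differentiable ℝ f) (hf' : Continuous (deriv f))
    (hf0 : f 0 = 0) (hR : ∀ s t, |s| ≤ R → |t| ≤ R → |deriv f s - deriv f t| ≤ C * |s - t| ^ β)
    {a b : ℝ} (hab : |a| + |b| ≤ R) :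
    |f (a + b) - f a - f b| ≤ C * |a| ^ β * |b| := by
  rw [sub_sub_eq_integral_of_hasDerivAt (fun x => (hf x).hasDerivAt) hf' hf0]
  refine abs_integral_le_mul_abs fun t ht => ?_
  simpa using hR (a + t) t ((abs_add_le a t).trans (by linarith)) (by linarith [abs_nonneg a])

lemma abs_add_sub_sub_sub_mul_deriv_le (hβ : 0 ≤ β) (hC : 0 ≤ C) (hf : Differentiable ℝ f)
    (hf' : Continuous (deriv f)) (hf0 : f 0 = 0) (hf'0 : deriv f 0 = 0)
    (hR : ∀ s t, |s| ≤ R → |t| ≤ R → |deriv f s - deriv f t| ≤ C * |s - t| ^ β)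
    {a t : ℝ} (hat : |a| + |t| ≤ R) :
    |f (a + t) - f a - f t - a * deriv f t| ≤ 2 * C * |a * t| ^ (β / 2) * |a| := by
  have hint : f (a + t) - f a - f t - a * deriv f t =
      ∫ s in (0 : ℝ)..a, (deriv f (t + s) - deriv f s - deriv f t) := by
    rw [integral_sub _ intervalIntegrable_const, integral_const, add_comm a,
      ← sub_sub_eq_integral_of_hasDerivAt (fun x => (hf x).hasDerivAt) hf' hf0]
    · simp only [sub_zero, smul_eq_mul, sub_left_inj]; ring
    · exact ((hf'.comp (continuous_const_add t)).sub hf').intervalIntegrable _ _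
  rw [hint]
  refine abs_integral_le_mul_abs fun s hs => ?_
  calc |deriv f (t + s) - deriv f s - deriv f t| = |deriv f (t + s) - deriv f t - deriv f s| := by
        rw [sub_right_comm]
    _ ≤ 2 * C * |t * s| ^ (β / 2) :=
        abs_add_sub_sub_le_of_holder hβ hC hf'0 hR (by linarith)
    _ ≤ 2 * C * |a * t| ^ (β / 2) := by
        rw [mul_comm t, abs_mul, abs_mul]; gcongr

lemma abs_primitive_add_defect_le (hβ : 0 ≤ β) (hC : 0 ≤ C) (hf : Differentiable ℝ f)
    (hf' : Continuous (deriv f)) (hf0 : f 0 = 0) (hf'0 : deriv f 0 = 0)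
    (hR : ∀ s t, |s| ≤ R → |t| ≤ R → |deriv f s - deriv f t| ≤ C * |s - t| ^ β)
    (hF : ∀ x, HasDerivAt F (f x) x) (hF0 : F 0 = 0) {a b : ℝ} (hab : |a| + |b| ≤ R) :
    |F (a + b) - F a - F b - f a * b - f b * a| ≤ 2 * C * |a * b| ^ (1 + β / 2) := by
  have hlin : ∫ t in (0 : ℝ)..b, (f a + a * deriv f t) = f a * b + f b * a := by
    rw [integral_add intervalIntegrable_const ((hf'.intervalIntegrable 0 b).const_mul a),
      integral_const, integral_const_mul,
      integral_deriv_eq_sub (fun x _ => hf x) (hf'.intervalIntegrable 0 b), hf0]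
    simp only [sub_zero, smul_eq_mul]; ring
  have hint : F (a + b) - F a - F b - f a * b - f b * a =
      ∫ t in (0 : ℝ)..b, (f (a + t) - f a - f t - a * deriv f t) := by
    rw [sub_sub _ (f a * b), ← hlin, sub_sub_eq_integral_of_hasDerivAt hF hf.continuous hF0,
      ← integral_sub]
    · congr 1; ext t; ring
    · exact ((hf.continuous.comp (continuous_const_add a)).sub hf.continuous).intervalIntegrable _ _
    · exact (continuous_const.add (continuous_const.mul hf')).intervalIntegrable _ _
  rw [hint]
  calc _ ≤ 2 * C * |a * b| ^ (β / 2) * |a| * |b| := abs_integral_le_mul_abs fun t ht =>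
        (abs_add_sub_sub_sub_mul_deriv_le hβ hC hf hf' hf0 hf'0 hR (by linarith)).trans
          (by rw [abs_mul, abs_mul]; gcongr)
    _ = 2 * C * |a * b| ^ (1 + β / 2) := by
        rw [Real.rpow_one_add' (abs_nonneg _) (by positivity), abs_mul]; ring

lemma abs_sum_sub_sum_le (hβ0 : 0 < β) (hβ1 : β ≤ 1) (hC : 0 ≤ C) (hf : Differentiable ℝ f)
    (hf' : Continuous (deriv f)) (hf0 : f 0 = 0)
    (hR : ∀ s t, |s| ≤ R → |t| ≤ R → |deriv f s - deriv f t| ≤ C * |s - t| ^ β) :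
    ∀ {m : ℕ} (v : Fin m → ℝ), ∑ i, |v i| ≤ R →
      |f (∑ i, v i) - ∑ i, f (v i)| ≤ C * ∑ i, ∑ j ∈ Ioi i, |v i| ^ β * |v j|
  | 0, _, _ => by simp [hf0]
  | m + 1, v, hv => by
    obtain ⟨w, a, rfl⟩ : ∃ w a, v = Fin.snoc w a :=
      ⟨Fin.init v, v (Fin.last m), (Fin.snoc_init_self v).symm⟩
    rw [Fin.sum_sum_Ioi_castSucc]
    simp only [Fin.sum_univ_castSucc, Fin.snoc_castSucc, Fin.snoc_last] at hv ⊢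
    have hw : ∑ i, |w i| ≤ R := by linarith [abs_nonneg a]
    have hSa : |∑ i, w i| + |a| ≤ R := by linarith [abs_sum_le_sum_abs w univ]
    calc |f (∑ i, w i + a) - (∑ i, f (w i) + f a)|
        = |(f (∑ i, w i + a) - f (∑ i, w i) - f a) + (f (∑ i, w i) - ∑ i, f (w i))| := by
          ring_nf
      _ ≤ C * |∑ i, w i| ^ β * |a| + C * ∑ i, ∑ j ∈ Ioi i, |w i| ^ β * |w j| :=
          (abs_add_le _ _).trans (add_le_add (abs_add_sub_sub_le_of_deriv_holder hf hf' hf0 hR hSa)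
            (abs_sum_sub_sum_le hβ0 hβ1 hC hf hf' hf0 hR w hw))
      _ ≤ C * (∑ i, |w i| ^ β) * |a| + C * ∑ i, ∑ j ∈ Ioi i, |w i| ^ β * |w j| := by
          gcongr; exact abs_sum_rpow_le_sum_abs_rpow hβ0 hβ1 _ _
      _ = C * (∑ i, ∑ j ∈ Ioi i, |w i| ^ β * |w j| + ∑ i, |w i| ^ β * |a|) := by
          rw [← sum_mul]; ring

lemma abs_primitive_add_defect_sum_le (hβ : 0 ≤ β) (hC : 0 ≤ C) (hf : Differentiable ℝ f)
    (hf' : Continuous (deriv f)) (hf0 : f 0 = 0) (hf'0 : deriv f 0 = 0)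
    (hR : ∀ s t, |s| ≤ R → |t| ≤ R → |deriv f s - deriv f t| ≤ C * |s - t| ^ β)
    (hF : ∀ x, HasDerivAt F (f x) x) (hF0 : F 0 = 0) {m N : ℕ} (hm : m ≤ N)
    (w : Fin m → ℝ) (a : ℝ) (hwa : ∑ i, |w i| + |a| ≤ R) :
    |F (∑ i, w i + a) - F (∑ i, w i) - F a - f (∑ i, w i) * a - f a * ∑ i, w i| ≤
      2 * C * N ^ (β / 2) * ∑ i, |w i * a| ^ (1 + β / 2) := by
  have hSa : |∑ i, w i| + |a| ≤ R := by linarith [abs_sum_le_sum_abs w univ]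
  calc _ ≤ 2 * C * |(∑ i, w i) * a| ^ (1 + β / 2) :=
        abs_primitive_add_defect_le hβ hC hf hf' hf0 hf'0 hR hF hF0 hSa
    _ ≤ 2 * C * ((m : ℝ) ^ (β / 2) * ∑ i, |w i * a| ^ (1 + β / 2)) := by
        gcongr
        simpa using abs_sum_mul_rpow_le (p := 1 + β / 2) (by linarith) w a
    _ ≤ 2 * C * N ^ (β / 2) * ∑ i, |w i * a| ^ (1 + β / 2) := by
        rw [← mul_assoc]; gcongr

lemma abs_sum_sub_sum_mul_le (hβ0 : 0 < β) (hβ1 : β ≤ 1) (hC : 0 ≤ C) (hf : Differentiable ℝ f)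
    (hf' : Continuous (deriv f)) (hf0 : f 0 = 0)
    (hR : ∀ s t, |s| ≤ R → |t| ≤ R → |deriv f s - deriv f t| ≤ C * |s - t| ^ β)
    {m : ℕ} (w : Fin m → ℝ) (a : ℝ) (hw : ∑ i, |w i| ≤ R) :
    |(f (∑ i, w i) - ∑ i, f (w i)) * a| ≤
      C * R ^ (1 - β) * ∑ i, ∑ j ∈ Ioi i, |w i * w j| ^ β * |a| := by
  have hwR : ∀ j, |w j| ≤ R := fun j =>
    (single_le_sum (fun i _ => abs_nonneg (w i)) (mem_univ j)).trans hw
  rw [abs_mul]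
  calc _ ≤ C * (∑ i, ∑ j ∈ Ioi i, |w i| ^ β * |w j|) * |a| := by
        gcongr; exact abs_sum_sub_sum_le hβ0 hβ1 hC hf hf' hf0 hR w hw
    _ ≤ C * (∑ i, ∑ j ∈ Ioi i, |w i| ^ β * (R ^ (1 - β) * |w j| ^ β)) * |a| := by
        gcongr with i _ j _; exact abs_le_rpow_mul_abs_rpow hβ1 (hwR j)
    _ = C * R ^ (1 - β) * ∑ i, ∑ j ∈ Ioi i, |w i * w j| ^ β * |a| := by
        simp only [abs_mul, Real.mul_rpow (abs_nonneg _) (abs_nonneg _), mul_sum, sum_mul]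
        refine sum_congr rfl fun i _ => sum_congr rfl fun j _ => by ring

lemma abs_primitiveDefect_le (hβ0 : 0 < β) (hβ1 : β ≤ 1) (hC : 0 ≤ C) (hf : Differentiable ℝ f)
    (hf' : Continuous (deriv f)) (hf0 : f 0 = 0) (hf'0 : deriv f 0 = 0)
    (hR : ∀ s t, |s| ≤ R → |t| ≤ R → |deriv f s - deriv f t| ≤ C * |s - t| ^ β)
    (hF : ∀ x, HasDerivAt F (f x) x) (hF0 : F 0 = 0) {N : ℕ} :
    ∀ {m : ℕ}, m ≤ N → ∀ v : Fin m → ℝ, ∑ i, |v i| ≤ R →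
      |primitiveDefect F f v| ≤ (2 * C * N ^ (β / 2) + C * R ^ (1 - β)) *
        (∑ i, ∑ j ∈ Ioi i, |v i * v j| ^ (1 + β / 2) +
          ∑ i, ∑ j ∈ Ioi i, ∑ k ∈ Ioi j, |v i * v j| ^ β * |v k|)
  | 0, _, _, _ => by simp [primitiveDefect, hF0]
  | m + 1, hm, v, hv => by
    obtain ⟨w, a, rfl⟩ : ∃ w a, v = Fin.snoc w a :=
      ⟨Fin.init v, v (Fin.last m), (Fin.snoc_init_self v).symm⟩
    simp only [Fin.sum_univ_castSucc, Fin.snoc_castSucc, Fin.snoc_last] at hv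
    have hw : ∑ i, |w i| ≤ R := by linarith [abs_nonneg a]
    have hmN : m ≤ N := Nat.le_of_succ_le hm
    have hR0 : 0 ≤ R := (sum_nonneg fun i _ => abs_nonneg (w i)).trans hw
    have ih := abs_primitiveDefect_le hβ0 hβ1 hC hf hf' hf0 hf'0 hR hF hF0 hmN w hw
    have h1 := abs_primitive_add_defect_sum_le hβ0.le hC hf hf' hf0 hf'0 hR hF hF0 hmN w a hv
    have h2 := abs_sum_sub_sum_mul_le hβ0 hβ1 hC hf hf' hf0 hR w a hw
    rw [primitiveDefect_snoc, Fin.sum_sum_Ioi_castSucc, Fin.sum_sum_sum_Ioi_castSucc]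
    simp only [Fin.snoc_castSucc, Fin.snoc_last]
    have hK1 : 0 ≤ 2 * C * N ^ (β / 2) := by positivity
    have hK2 : 0 ≤ C * R ^ (1 - β) := by positivity
    have hP : 0 ≤ ∑ i, |w i * a| ^ (1 + β / 2) := by positivity
    have hT : 0 ≤ ∑ i, ∑ j ∈ Ioi i, |w i * w j| ^ β * |a| := by positivity
    refine (abs_add_three _ _ _).trans ?_
    nlinarith [mul_nonneg hK1 hT, mul_nonneg hK2 hP]

end Holder

/-- Lemma B.2 of the paper: deviation from additivity of the primitive `F` of `f`. -/
theorem stmt2 (f : ℝ → ℝ) (β : ℝ) (hβ0 : 0 < β) (hβ1 : β ≤ 1)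
    (hdiff : Differentiable ℝ f)
    (hholder : ∀ K : Set ℝ, IsCompact K → ∃ C > 0, ∀ s ∈ K, ∀ t ∈ K,
      |deriv f s - deriv f t| ≤ C * |s - t| ^ β)
    (hf0 : f 0 = 0) (hf'0 : deriv f 0 = 0)
    (F : ℝ → ℝ) (hF : ∀ u : ℝ, F u = ∫ t in (0:ℝ)..u, f t)
    (n : ℕ) (ub : ℝ) (hub : 0 < ub) :
    ∃ b₂ > 0, ∀ u : Fin n → ℝ, (∀ i, u i ∈ Set.Icc (-ub) ub) →
      |F (∑ i, u i) - ∑ i, F (u i) -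
          ∑ i : Fin n, ∑ j ∈ Finset.univ.erase i, f (u i) * u j| ≤
        b₂ * (∑ i : Fin n, ∑ j ∈ Finset.Ioi i, |u i * u j| ^ (1 + β / 2) +
          ∑ i : Fin n, ∑ j ∈ Finset.Ioi i, ∑ k ∈ Finset.Ioi j, |u i * u j| ^ β * |u k|) := by
  have hf' : Continuous (deriv f) := continuous_of_isCompact_holder hβ0 hholder
  have hFderiv : ∀ x, HasDerivAt F (f x) x := fun x => by
    rw [show F = fun u => ∫ t in (0 : ℝ)..u, f t from funext hF]
    exact (hdiff.continuous.integral_hasStrictDerivAt 0 x).hasDerivAt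
  have hF0 : F 0 = 0 := by rw [hF, integral_same]
  -- any `R ≥ n * ub` would do; `R > 0` keeps the constant positive when `n = 0`
  set R := (n + 1) * ub
  obtain ⟨C, hC, hCR⟩ := hholder (Set.Icc (-R) R) isCompact_Icc
  have hR : ∀ s t, |s| ≤ R → |t| ≤ R → |deriv f s - deriv f t| ≤ C * |s - t| ^ β :=
    fun s t hs ht => hCR s (abs_le.1 hs) t (abs_le.1 ht)
  refine ⟨2 * C * n ^ (β / 2) + C * R ^ (1 - β), by positivity, fun u hu => ?_⟩
  have hsum : ∑ i, |u i| ≤ R := calc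
    ∑ i, |u i| ≤ ∑ _i : Fin n, ub := sum_le_sum fun i _ => abs_le.2 (hu i)
    _ ≤ R := by
      rw [sum_const, card_univ, Fintype.card_fin, nsmul_eq_mul]; nlinarith
  have hcross : ∀ i, ∑ j ∈ univ.erase i, f (u i) * u j = f (u i) * (∑ j, u j - u i) := fun i => by
    rw [← mul_sum, sum_erase_eq_sub (mem_univ i)]
  simp only [hcross]
  exact abs_primitiveDefect_le hβ0 hβ1 hC.le hdiff hf' hf0 hf'0 hR hFderiv hF0 le_rfl u hsum
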